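/- The sin limiter φ(f) = sin(πf) is a symmetric high-resolution TVD limiter: for every f ∈ [0, 1], minmod(f) ≤ sin(πf) ≤ superbee(f), sin(π(1−f)) = sin(πf), and sin(π/2) = 1. -/
import Mathlib


/-- The minmod limiter. -/
noncomputable def minmod (f : ℝ) : ℝ := min (2 * f) (2 * (1 - f))

/-- The superbee limiter. -/
noncomputable def superbee (f : ℝ) : ℝ :=
  if f ≤ 1 / 3 then 4 * f
  else if f ≤ 1 / 2 then 2 * (1 - f)
  else if f ≤ 2 / 3 then 2 * f
  else 4 * (1 - f)

/-- The sin limiter `φ(f) = sin(πf)` is a symmetric high-resolution TVD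
limiter: `minmod(f) ≤ sin(πf) ≤ superbee(f)` on `[0,1]`,
`sin(π(1−f)) = sin(πf)`, and `sin(π/2) = 1`. -/
theorem sin_limiter_high_resolution_tvd_symmetric :
    (∀ f : ℝ, 0 ≤ f → f ≤ 1 →
      minmod f ≤ Real.sin (Real.pi * f) ∧
      Real.sin (Real.pi * f) ≤ superbee f ∧
      Real.sin (Real.pi * (1 - f)) = Real.sin (Real.pi * f)) ∧
    Real.sin (Real.pi / 2) = 1 := by
  have hπ := Real.pi_gt_three
  have hπ4 := Real.pi_lt_d2
  refine ⟨fun f hf0 hf1 => ?_, Real.sin_pi_div_two⟩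
  have hsym : Real.sin (Real.pi * (1 - f)) = Real.sin (Real.pi * f) := by
    rw [mul_one_sub, Real.sin_pi_sub]
  refine ⟨?_, ?_, hsym⟩
  · -- minmod ≤ sin
    rcases le_or_gt f (1/2) with h | h
    · have := Real.mul_le_sin (x := Real.pi * f) (by positivity)
        (by nlinarith)
      have h2 : 2 / Real.pi * (Real.pi * f) = 2 * f := by
        field_simp
      rw [h2] at this
      exact le_trans (min_le_left _ _) this
    · have := Real.mul_le_sin (x := Real.pi * (1 - f)) (by nlinarith) (by nlinarith)
      have h2 : 2 / Real.pi * (Real.pi * (1 - f)) = 2 * (1 - f) := by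
        field_simp
      rw [h2, hsym] at this
      exact le_trans (min_le_right _ _) this
  · -- sin ≤ superbee
    unfold superbee
    split_ifs with h1 h2 h3
    · have := Real.sin_le (x := Real.pi * f) (by positivity)
      nlinarith
    · have := Real.sin_le_one (Real.pi * f)
      linarith
    · have := Real.sin_le_one (Real.pi * f)
      linarith
    · have := Real.sin_le (x := Real.pi * (1 - f)) (by nlinarith)
      rw [hsym] at this
      nlinarith
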